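/- Under the hypotheses of Lemma 1 (coherent states |z⟩ = W(z)|0⟩ over a group G with compact open subgroup H and K = H × A(Ĝ,H) maximal isotropic, |0⟩ the K-invariant vacuum), |⟨z|z'⟩| = 1 if z − z' ∈ K and |⟨z|z'⟩| = 0 otherwise. -/

import Mathlib

open scoped Classical

open ContinuousLinearMap

/-- The annihilator of a subgroup `H` in the Pontryagin dual of `G`. -/
def annihilator {G : Type*} [CommGroup G] [TopologicalSpace G] [IsTopologicalGroup G]
    (H : Subgroup G) : Subgroup (PontryaginDual G) where
  carrier := {χ | ∀ h ∈ H, χ h = 1}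
  one_mem' := by intro h hh; rfl
  mul_mem' := by intro χ ψ hχ hψ h hh; show χ h * ψ h = 1; rw [hχ h hh, hψ h hh, mul_one]
  inv_mem' := by intro χ hχ h hh; show (χ h)⁻¹ = 1; rw [hχ h hh, inv_one]

/-- The symplectic cocycle `ω((g,λ),(g',λ')) = λ(g')·conj(λ'(g))` on `F = G × Ĝ`. -/
noncomputable def omegaCocycle {G : Type*} [CommGroup G] [TopologicalSpace G] [IsTopologicalGroup G]
    (z z' : G × PontryaginDual G) : ℂ :=
  (z.2 z'.1 : ℂ) * (starRingEnd ℂ) (z'.2 z.1 : ℂ)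

/-!
If `z / z' ∈ K`, then `W (z / z')` fixes the vacuum, so the projective and commutation relations
make `W z v` and `W z' v` proportional; as both are unit vectors, their overlap has modulus one.
Otherwise maximality of `K` gives `u ∈ K` with `ω(z / z', u) ≠ 1`. The unitary `W u` fixes the
vacuum, hence multiplies `W z v` and `W z' v` by the phases `ω(u, z)` and `ω(u, z')`; preserving
their inner product while the phases differ by `ω(z / z', u)` forces that inner product to vanish.
-/

section Cocycle

variable {G : Type*} [CommGroup G] [TopologicalSpace G] [IsTopologicalGroup G]

lemma norm_omegaCocycle (z u : G × PontryaginDual G) : ‖omegaCocycle z u‖ = 1 := by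
  rw [omegaCocycle, norm_mul, Complex.norm_conj, Circle.norm_coe, Circle.norm_coe, mul_one]

lemma omegaCocycle_swap (z u : G × PontryaginDual G) :
    omegaCocycle u z = starRingEnd ℂ (omegaCocycle z u) := by
  rw [omegaCocycle, omegaCocycle, map_mul, Complex.conj_conj, mul_comm]

lemma omegaCocycle_mul_left (z w u : G × PontryaginDual G) :
    omegaCocycle (z * w) u = omegaCocycle z u * omegaCocycle w u := by
  have hpointwise : (z * w).2 u.1 = z.2 u.1 * w.2 u.1 := rfl
  simp only [omegaCocycle, hpointwise, Prod.fst_mul, map_mul, Circle.coe_mul]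
  ring

lemma omegaCocycle_div_left (z z' u : G × PontryaginDual G) :
    omegaCocycle (z / z') u = omegaCocycle z u * starRingEnd ℂ (omegaCocycle z' u) := by
  have hunit : omegaCocycle z' u * starRingEnd ℂ (omegaCocycle z' u) = 1 := by
    rw [Complex.mul_conj, Complex.normSq_eq_norm_sq, norm_omegaCocycle]; norm_num
  rw [← div_mul_cancel z z', omegaCocycle_mul_left, div_mul_cancel, mul_assoc, hunit, mul_one]

end Cocycle

lemma inner_eq_zero_of_map_eq_smul {𝕜 E : Type*} [RCLike 𝕜] [NormedAddCommGroup E]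
    [InnerProductSpace 𝕜 E] {T : E → E} (hT : ∀ x y, inner 𝕜 (T x) (T y) = inner 𝕜 x y)
    {x y : E} {α β : 𝕜} (hx : T x = α • x) (hy : T y = β • y)
    (hαβ : starRingEnd 𝕜 α * β ≠ 1) :
    inner 𝕜 x y = 0 := by
  have hfix : inner 𝕜 x y = starRingEnd 𝕜 α * β * inner 𝕜 x y :=
    calc inner 𝕜 x y = inner 𝕜 (T x) (T y) := (hT x y).symm
      _ = starRingEnd 𝕜 α * β * inner 𝕜 x y := by
        rw [hx, hy, inner_smul_left, inner_smul_right, mul_assoc]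
  by_contra hne
  exact hαβ (mul_eq_right₀ hne |>.mp hfix.symm)

section CoherentStates

variable {G : Type*} [CommGroup G] [TopologicalSpace G] [IsTopologicalGroup G]
  {E : Type*} [NormedAddCommGroup E] [InnerProductSpace ℂ E]
  {W : G × PontryaginDual G → E →L[ℂ] E}

lemma apply_apply_eq_omegaCocycle_smul_of_apply_eq_self
    (hcomm : ∀ z z', (W z).comp (W z') = omegaCocycle z z' • ((W z').comp (W z)))
    {u : G × PontryaginDual G} {v : E} (hu : W u v = v) (z : G × PontryaginDual G) :
    W u (W z v) = omegaCocycle u z • W z v := by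
  simpa [hu] using congr($(hcomm u z) v)

lemma smul_apply_eq_smul_apply_of_apply_div_eq_self
    (hcomm : ∀ z z', (W z).comp (W z') = omegaCocycle z z' • ((W z').comp (W z)))
    {c : G × PontryaginDual G → G × PontryaginDual G → ℂ}
    (hproj : ∀ z z', (W z).comp (W z') = c z z' • W (z * z'))
    {v : E} {z z' : G × PontryaginDual G} (hfix : W (z / z') v = v) :
    c (z / z') z' • W z v = omegaCocycle (z / z') z' • W z' v := by
  rw [← apply_apply_eq_omegaCocycle_smul_of_apply_eq_self hcomm hfix, ← comp_apply, hproj,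
    div_mul_cancel, smul_apply]

end CoherentStates

theorem coherent_state_overlap_general
    {G : Type*} [CommGroup G] [TopologicalSpace G] [IsTopologicalGroup G]
    {Hsp : Type*} [NormedAddCommGroup Hsp] [InnerProductSpace ℂ Hsp] [CompleteSpace Hsp]
    (K : Subgroup (G × PontryaginDual G))
    (W : G × PontryaginDual G → Hsp →L[ℂ] Hsp)
    (hWunit : ∀ z, (adjoint (W z)).comp (W z) = 1 ∧ (W z).comp (adjoint (W z)) = 1)
    (hcomm : ∀ z z', (W z).comp (W z') = omegaCocycle z z' • ((W z').comp (W z)))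
    (c : G × PontryaginDual G → G × PontryaginDual G → ℂ)
    (hproj : ∀ z z', (W z).comp (W z') = c z z' • W (z * z'))
    (hmax : ∀ z ∉ K, ∃ u ∈ K, omegaCocycle z u ≠ 1)
    (v : Hsp) (hv : ‖v‖ = 1) (hinv : ∀ u ∈ K, W u v = v) :
    ∀ z z', ‖inner ℂ (W z v) (W z' v)‖ = if z / z' ∈ K then 1 else 0 := by
  intro z z'
  have hiso w : ∀ x y, inner ℂ (W w x) (W w y) = inner ℂ x y :=
    (W w).inner_map_map_iff_adjoint_comp_self.mpr (hWunit w).1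
  have hnorm w : ‖W w v‖ = 1 := by
    rw [(W w).norm_map_iff_adjoint_comp_self.mpr (hWunit w).1, hv]
  have hne w : W w v ≠ 0 := fun h => by simpa [h] using hnorm w
  split_ifs with hzK
  · have hrel := smul_apply_eq_smul_apply_of_apply_div_eq_self hcomm hproj (hinv _ hzK)
    set r := (omegaCocycle (z / z') z')⁻¹ * c (z / z') z'
    have hprop : W z' v = r • W z v := by
      have hω : omegaCocycle (z / z') z' ≠ 0 := by simp [← norm_ne_zero_iff, norm_omegaCocycle]
      rw [mul_smul, hrel, inv_smul_smul₀ hω]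
    have hr : r ≠ 0 := fun h => hne z' (by rw [hprop, h, zero_smul])
    rw [(norm_inner_eq_norm_iff (hne z) (hne z')).2 ⟨r, hr, hprop⟩, hnorm, hnorm, one_mul]
  · obtain ⟨u, huK, hωu⟩ := hmax _ hzK
    have hphase := apply_apply_eq_omegaCocycle_smul_of_apply_eq_self hcomm (hinv u huK)
    rw [inner_eq_zero_of_map_eq_smul (hiso u) (hphase z) (hphase z') ?_, norm_zero]
    rwa [omegaCocycle_swap, omegaCocycle_swap z', Complex.conj_conj, ← omegaCocycle_div_left]

/-- Lemma 1: coherent states `|z⟩ = W(z)|0⟩` are orthogonal for `z/z' ∉ K` and differ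
only by a phase for `z/z' ∈ K`. -/
theorem coherent_state_overlap
    {G : Type*} [CommGroup G] [TopologicalSpace G] [IsTopologicalGroup G]
    {Hsp : Type*} [NormedAddCommGroup Hsp] [InnerProductSpace ℂ Hsp] [CompleteSpace Hsp]
    (H : Subgroup G) (hHopen : IsOpen (H : Set G)) (hHcpt : IsCompact (H : Set G))
    (K : Subgroup (G × PontryaginDual G)) (hK : K = H.prod (annihilator H))
    (W : G × PontryaginDual G → Hsp →L[ℂ] Hsp)
    (hWunit : ∀ z, (adjoint (W z)).comp (W z) = 1 ∧ (W z).comp (adjoint (W z)) = 1)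
    (hcomm : ∀ z z', (W z).comp (W z') = omegaCocycle z z' • ((W z').comp (W z)))
    (c : G × PontryaginDual G → G × PontryaginDual G → ℂ)
    (hc : ∀ z z', ‖c z z'‖ = 1)
    (hproj : ∀ z z', (W z).comp (W z') = c z z' • W (z * z'))
    (hirr : ∀ V : Submodule ℂ Hsp, IsClosed (V : Set Hsp) →
      (∀ z, ∀ x ∈ V, W z x ∈ V) → V = ⊥ ∨ V = ⊤)
    (hmax : ∀ z ∉ K, ∃ u ∈ K, omegaCocycle z u ≠ 1)
    (v : Hsp) (hv : ‖v‖ = 1) (hinv : ∀ u ∈ K, W u v = v) :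
    ∀ z z', ‖inner ℂ (W z v) (W z' v)‖ = if z / z' ∈ K then 1 else 0 :=
  coherent_state_overlap_general K W hWunit hcomm c hproj hmax v hv hinv
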